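/- arXiv:2112.04989 — 3 statements merged into one kernel-verified Lean document; each statement's English description precedes it below -/
import Mathlib

section
/- Let σ be a generator of Gal(𝔽_{q^m}/𝔽_q), let n ≤ m, let β_1,…,β_n ∈ 𝔽_{q^m} be linearly independent over 𝔽_q with S = ⟨β_1,…,β_n⟩_{𝔽_q}, let a_1,…,a_t ∈ 𝔽_{q^m}^* have pairwise distinct norms N_{q^m/q}(a_i), let 2 ≤ k ≤ nt, and let γ, δ ∈ 𝔽_{q^m}^*. For i ∈ {1,…,t} set U_i = { (y, σ(y)·N_1(a_i), …, σ^{k−1}(y)·N_{k−1}(a_i)) : y ∈ S } ⊆ 𝔽_{q^m}^k, and set U_0 = 𝔽_q·(γ,0,…,0) and U_∞ = 𝔽_q·(0,…,0,δ). Then Σ_{i=1}^t dim_{𝔽_q}(U_i ∩ H) + dim_{𝔽_q}(U_0 ∩ H) + dim_{𝔽_q}(U_∞ ∩ H) ≤ k − 1 for every 𝔽_{q^m}-hyperplane H of 𝔽_{q^m}^k; equivalently, the doubly-extended linearized Reed-Solomon code of dimension k associated with these data is a maximum sum-rank distance code (of length nt+2 and minimum distance nt+3−k). -/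
/-- The dot-product functional `w ↦ ∑ j, v j * w j`. -/
noncomputable def dotL (Fqm : Type) [Field Fqm] {k : ℕ} (v : Fin k → Fqm) :
    (Fin k → Fqm) →ₗ[Fqm] Fqm where
  toFun w := ∑ j, v j * w j
  map_add' x y := by simp [mul_add, Finset.sum_add_distrib]
  map_smul' c x := by
    simp only [Pi.smul_apply, smul_eq_mul, RingHom.id_apply, Finset.mul_sum]
    exact Finset.sum_congr rfl fun j _ => by ring

/-- `v^⊥ = {w : Fqm^k | ∑ j, v j * w j = 0}` regarded as an `Fq`-subspace of `Fqm^k`. -/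
noncomputable def perpQ (Fq Fqm : Type) [Field Fq] [Field Fqm] [Algebra Fq Fqm]
    {k : ℕ} (v : Fin k → Fqm) : Submodule Fq (Fin k → Fqm) :=
  Submodule.restrictScalars Fq (LinearMap.ker (dotL Fqm v))

/-- The `Fq`-linear map `y ↦ (y, σ(y)·N₁(a), σ²(y)·N₂(a), …, σ^{k-1}(y)·N_{k-1}(a))`,
where `N_j(a) = ∏_{l<j} σ^l(a)`. -/
noncomputable def lrsMap (Fq Fqm : Type) [Field Fq] [Field Fqm] [Algebra Fq Fqm]
    (σ : Fqm ≃ₐ[Fq] Fqm) (k : ℕ) (a : Fqm) : Fqm →ₗ[Fq] (Fin k → Fqm) where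
  toFun y := fun j => (σ ^ (j : ℕ)) y * ∏ l ∈ Finset.range (j : ℕ), (σ ^ l) a
  map_add' x y := by funext j; simp [map_add, add_mul]
  map_smul' c x := by funext j; simp [_root_.map_smul, smul_mul_assoc]

/-!
On the `i`-th block the hyperplane `v^⊥` pulls back to the kernel of the skew polynomial
`F = ∑ v_j X^j ∈ Fqm[X; σ]` evaluated at the semilinear operator `D_{a_i} : y ↦ σ(y) a_i`.
If the `a_i` have pairwise distinct norms, then `∑ᵢ dim ker F(D_{a_i}) ≤ deg F`: a nonzero
`y ∈ ker F(D_{a_i})` makes `c = σ(y) a_i / y` a right root of `F`, so `F = G · (X - c)`, and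
`D_a - c` has a kernel of dimension at most one, nonzero only when `N(a) = N(c)`, hence for at
most one `a = a_i`. Since `D_a` is invertible, a factor `X^e` of `F` costs nothing, so the
blocks contribute at most `d - e`, where `e` and `d` are the lowest and highest indices with
`v_j ≠ 0`. Finally `U₀` meets `v^⊥` only if `e > 0`, and `U∞` only if `d < k - 1`, each in
dimension at most one.
-/

open Finset Module

section KernelDimension

variable {K V W X : Type*} [Field K] [AddCommGroup V] [Module K V] [AddCommGroup W] [Module K W]
  [AddCommGroup X] [Module K X]

lemma finrank_ker_comp_le [FiniteDimensional K V] [FiniteDimensional K W]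
    (A : W →ₗ[K] X) (B : V →ₗ[K] W) :
    finrank K (LinearMap.ker (A ∘ₗ B)) ≤
      finrank K (LinearMap.ker A) + finrank K (LinearMap.ker B) := by
  set p := LinearMap.ker (A ∘ₗ B)
  have hB : ∀ x : p, B x ∈ LinearMap.ker A := fun x => x.2
  let B' : p →ₗ[K] LinearMap.ker A := (B ∘ₗ p.subtype).codRestrict _ hB
  have hker : finrank K (LinearMap.ker B') ≤ finrank K (LinearMap.ker B) := by
    refine LinearMap.finrank_le_finrank_of_injective
      (f := (p.subtype ∘ₗ (LinearMap.ker B').subtype).codRestrict _ fun x => ?_) ?_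
    · exact congrArg Subtype.val x.2
    · intro x y hxy
      have h := congrArg Subtype.val hxy
      ext
      exact h
  have := LinearMap.finrank_range_add_finrank_ker B'
  have := Submodule.finrank_le (LinearMap.range B')
  omega

lemma finrank_span_singleton_inf_le_one (x : V) (U : Submodule K V) :
    finrank K ↥((K ∙ x) ⊓ U) ≤ 1 :=
  (Submodule.finrank_mono inf_le_left).trans ((finrank_span_le_card {x}).trans (by simp))

end KernelDimension

section TwistedMultiplication

variable {K L : Type*} [Field K] [Field L] [Algebra K L] (σ : L ≃ₐ[K] L)

def partialNorm (j : ℕ) (a : L) : L :=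
  ∏ l ∈ range j, (σ ^ l) a

@[simp] lemma partialNorm_zero (a : L) : partialNorm σ 0 a = 1 := prod_range_zero _

lemma partialNorm_succ (j : ℕ) (a : L) :
    partialNorm σ (j + 1) a = partialNorm σ j a * (σ ^ j) a :=
  prod_range_succ _ _

lemma partialNorm_succ' (j : ℕ) (a : L) :
    partialNorm σ (j + 1) a = a * σ (partialNorm σ j a) := by
  simp only [partialNorm, prod_range_succ', map_prod, pow_succ', pow_zero, AlgEquiv.one_apply,
    AlgEquiv.mul_apply, mul_comm]

lemma partialNorm_ne_zero {a : L} (ha : a ≠ 0) (j : ℕ) : partialNorm σ j a ≠ 0 :=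
  prod_ne_zero_iff.2 fun l _ => (map_ne_zero (σ ^ l)).2 ha

def twistMul (b : L) : L →ₗ[K] L :=
  LinearMap.mulRight K b ∘ₗ σ.toLinearMap

@[simp] lemma twistMul_apply (b y : L) : twistMul σ b y = σ y * b := rfl

lemma twistMul_injective {b : L} (hb : b ≠ 0) : Function.Injective (twistMul σ b) :=
  fun _ _ h => σ.injective (mul_right_cancel₀ hb h)

lemma twistMul_pow_apply (b y : L) (j : ℕ) :
    (twistMul σ b ^ j) y = (σ ^ j) y * partialNorm σ j b := by
  induction j with
  | zero => simp
  | succ j ih =>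
    rw [pow_succ', Module.End.mul_apply, ih, partialNorm_succ', twistMul_apply, map_mul]
    simp only [pow_succ', AlgEquiv.mul_apply]
    ring

lemma twistMul_pow_apply_mul (b c y : L) (j : ℕ) :
    (twistMul σ b ^ j) (c * y) = (σ ^ j) c * (twistMul σ b ^ j) y := by
  rw [twistMul_pow_apply, twistMul_pow_apply, map_mul, mul_assoc]

lemma twistMul_pow_apply_of_twistMul_apply_eq {b c y : L} (h : twistMul σ b y = c * y) (j : ℕ) :
    (twistMul σ b ^ j) y = partialNorm σ j c * y := by
  induction j with
  | zero => simp
  | succ j ih =>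
    rw [pow_succ', Module.End.mul_apply, ih, twistMul_apply, map_mul, mul_assoc,
      ← twistMul_apply σ b y, h, partialNorm_succ']
    ring

lemma partialNorm_eq_of_twistMul_apply_eq {m : ℕ} (hσm : σ ^ m = 1) {b c y : L} (hy : y ≠ 0)
    (h : twistMul σ b y = c * y) : partialNorm σ m b = partialNorm σ m c := by
  have := twistMul_pow_apply_of_twistMul_apply_eq σ h m
  rw [twistMul_pow_apply, hσm, AlgEquiv.one_apply, mul_comm] at this
  exact mul_right_cancel₀ hy this

end TwistedMultiplication

section SkewEvaluation

variable {K L : Type*} [Field K] [Field L] [Algebra K L] (σ : L ≃ₐ[K] L)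

/-- `F(D_b)` for the skew polynomial `F = ∑_{j<N} f_j X^j`, where `D_b = twistMul σ b`. -/
def skewEval (f : ℕ → L) (N : ℕ) (b : L) : L →ₗ[K] L :=
  ∑ j ∈ range N, f j • twistMul σ b ^ j

lemma skewEval_apply (f : ℕ → L) (N : ℕ) (b y : L) :
    skewEval σ f N b y = ∑ j ∈ range N, f j * (twistMul σ b ^ j) y := by
  simp [skewEval]

lemma skewEval_apply_of_twistMul_apply_eq {b c y : L} (h : twistMul σ b y = c * y)
    (f : ℕ → L) (N : ℕ) :
    skewEval σ f N b y = (∑ j ∈ range N, f j * partialNorm σ j c) * y := by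
  simp only [skewEval_apply, twistMul_pow_apply_of_twistMul_apply_eq σ h, sum_mul, mul_assoc]

lemma skewEval_eq_of_le {f : ℕ → L} {N M : ℕ} (hNM : N ≤ M)
    (hf : ∀ j, N ≤ j → j < M → f j = 0) (b : L) :
    skewEval σ f M b = skewEval σ f N b := by
  refine (sum_subset (range_subset_range.2 hNM) fun j hjM hjN => ?_).symm
  rw [hf j (by simpa using hjN) (mem_range.1 hjM), zero_smul]

lemma skewEval_eq_comp_pow {f : ℕ → L} {e N : ℕ} (he : e ≤ N) (hf : ∀ j < e, f j = 0)
    (b : L) :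
    skewEval σ f N b = skewEval σ (fun j => f (j + e)) (N - e) b ∘ₗ twistMul σ b ^ e := by
  rw [skewEval, skewEval, ← Module.End.mul_eq_comp, sum_mul, ← sum_range_add_sum_Ico _ he,
    sum_eq_zero fun j hj => by rw [hf j (mem_range.1 hj), zero_smul], zero_add,
    sum_Ico_eq_sum_range]
  refine sum_congr rfl fun j _ => ?_
  rw [smul_mul_assoc, ← pow_add, add_comm j e]

lemma skewEval_eq_comp_sub {f g : ℕ → L} {c : L} {d : ℕ} (hg : g (d + 1) = 0)
    (h0 : f 0 = -(g 0 * c)) (hf : ∀ j ≤ d, f (j + 1) = g j - g (j + 1) * (σ ^ (j + 1)) c)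
    (b : L) :
    skewEval σ f (d + 2) b =
      skewEval σ g (d + 1) b ∘ₗ (twistMul σ b - LinearMap.mulLeft K c) := by
  ext y
  set u := fun j => (twistMul σ b ^ j) y
  have hu : ∀ j,
      (twistMul σ b ^ j) (twistMul σ b y - c * y) = u (j + 1) - (σ ^ j) c * u j := by
    intro j
    rw [map_sub, twistMul_pow_apply_mul, ← Module.End.mul_apply, ← pow_succ]
  have hshift : ∑ j ∈ range (d + 1), g (j + 1) * (σ ^ (j + 1)) c * u (j + 1) + g 0 * c * u 0 =
      ∑ j ∈ range (d + 1), g j * (σ ^ j) c * u j := by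
    have h := sum_range_succ' (fun j => g j * (σ ^ j) c * u j) (d + 1)
    rw [sum_range_succ, hg, zero_mul, zero_mul, add_zero] at h
    simpa using h.symm
  simp only [LinearMap.comp_apply, LinearMap.sub_apply, LinearMap.mulLeft_apply, skewEval_apply,
    hu]
  rw [sum_range_succ', h0, sum_congr rfl fun j hj => by rw [hf j (mem_range_succ_iff.1 hj)]]
  simp only [sub_mul, mul_sub, sum_sub_distrib, mul_assoc] at hshift ⊢
  linear_combination -hshift

lemma exists_skewEval_eq_comp_sub {f : ℕ → L} {c : L} (hc : c ≠ 0) {d : ℕ}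
    (hroot : ∑ j ∈ range (d + 2), f j * partialNorm σ j c = 0) :
    ∃ g : ℕ → L, g d = f (d + 1) ∧ ∀ b, skewEval σ f (d + 2) b =
      skewEval σ g (d + 1) b ∘ₗ (twistMul σ b - LinearMap.mulLeft K c) := by
  -- the coefficients of the quotient are the tails of `∑ f_i N_i(c) = 0`, rescaled by `N_{j+1}(c)`
  set g : ℕ → L := fun j =>
    (∑ i ∈ Ico (j + 1) (d + 2), f i * partialNorm σ i c) / partialNorm σ (j + 1) c
  have hN := partialNorm_ne_zero σ hc
  have hg : g (d + 1) = 0 := by simp [g]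
  refine ⟨g, ?_, skewEval_eq_comp_sub σ hg ?_ ?_⟩
  · simp [g, hN]
  · have hN₁ : partialNorm σ 1 c = c := by simp [partialNorm_succ]
    rw [range_eq_Ico, sum_eq_sum_Ico_succ_bot (by omega)] at hroot
    simp only [g, zero_add, hN₁, partialNorm_zero, mul_one, div_mul_cancel₀ _ hc] at hroot ⊢
    linear_combination hroot
  · intro j hj
    simp only [g]
    rw [sum_eq_sum_Ico_succ_bot (by omega : j + 1 < d + 2), partialNorm_succ σ (j + 1) c]
    have hσc : (σ ^ (j + 1)) c ≠ 0 := (map_ne_zero _).2 hc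
    have := hN (j + 1)
    field_simp
    ring

end SkewEvaluation

section Galois

variable {K L : Type*} [Field K] [Field L] [Algebra K L] [FiniteDimensional K L] [IsGalois K L]
  {σ : L ≃ₐ[K] L}

lemma mem_range_algebraMap_of_apply_eq (hσ : ∀ τ : L ≃ₐ[K] L, τ ∈ Subgroup.zpowers σ) {u : L}
    (hu : σ u = u) : u ∈ Set.range (algebraMap K L) :=
  (IsGalois.mem_range_algebraMap_iff_fixed u).2 fun τ =>
    (Subgroup.zpowers_le.2 hu : Subgroup.zpowers σ ≤ MulAction.stabilizer _ u) (hσ τ)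

lemma finrank_ker_twistMul_sub_le_one (hσ : ∀ τ : L ≃ₐ[K] L, τ ∈ Subgroup.zpowers σ) {b : L}
    (hb : b ≠ 0) (c : L) :
    finrank K (LinearMap.ker (twistMul σ b - LinearMap.mulLeft K c)) ≤ 1 := by
  by_cases h : LinearMap.ker (twistMul σ b - LinearMap.mulLeft K c) = ⊥
  · rw [h, finrank_bot]
    exact zero_le_one
  obtain ⟨z, hz, hz0⟩ := (Submodule.ne_bot_iff _).1 h
  refine finrank_le_one ⟨z, hz⟩ fun ⟨w, hw⟩ => ?_
  simp only [LinearMap.mem_ker, LinearMap.sub_apply, twistMul_apply, LinearMap.mulLeft_apply,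
    sub_eq_zero] at hz hw
  have hfix : σ (w / z) = w / z := by
    rw [map_div₀, div_eq_div_iff ((map_ne_zero σ).2 hz0) hz0]
    apply mul_right_cancel₀ hb
    linear_combination z * hw - w * hz
  obtain ⟨r, hr⟩ := mem_range_algebraMap_of_apply_eq hσ hfix
  exact ⟨r, Subtype.ext (by simp [Algebra.smul_def, hr, div_mul_cancel₀ _ hz0])⟩

variable {ι : Type*} [Fintype ι] {m : ℕ} {a : ι → L}

lemma sum_finrank_ker_twistMul_sub_le_one (hσm : σ ^ m = 1)
    (hσ : ∀ τ : L ≃ₐ[K] L, τ ∈ Subgroup.zpowers σ) (ha : ∀ i, a i ≠ 0)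
    (hnorm : Function.Injective fun i => partialNorm σ m (a i)) (c : L) :
    ∑ i, finrank K (LinearMap.ker (twistMul σ (a i) - LinearMap.mulLeft K c)) ≤ 1 := by
  have hnorm_eq : ∀ i, LinearMap.ker (twistMul σ (a i) - LinearMap.mulLeft K c) ≠ ⊥ →
      partialNorm σ m (a i) = partialNorm σ m c := by
    intro i hi
    obtain ⟨z, hz, hz0⟩ := (Submodule.ne_bot_iff _).1 hi
    exact partialNorm_eq_of_twistMul_apply_eq σ hσm hz0 (sub_eq_zero.1 hz)
  by_cases h : ∀ i, LinearMap.ker (twistMul σ (a i) - LinearMap.mulLeft K c) = ⊥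
  · rw [sum_eq_zero fun i _ => Submodule.finrank_eq_zero.2 (h i)]
    exact zero_le_one
  obtain ⟨i, hi⟩ := not_forall.1 h
  rw [sum_eq_single i (fun i' _ hne => ?_) (by simp)]
  · exact finrank_ker_twistMul_sub_le_one hσ (ha i) c
  · by_contra hi'
    exact hne (hnorm ((hnorm_eq i' (by simpa using hi')).trans (hnorm_eq i hi).symm))

theorem sum_finrank_ker_skewEval_le (hσm : σ ^ m = 1)
    (hσ : ∀ τ : L ≃ₐ[K] L, τ ∈ Subgroup.zpowers σ) (ha : ∀ i, a i ≠ 0)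
    (hnorm : Function.Injective fun i => partialNorm σ m (a i)) (d : ℕ) (f : ℕ → L)
    (hf : f d ≠ 0) : ∑ i, finrank K (LinearMap.ker (skewEval σ f (d + 1) (a i))) ≤ d := by
  induction d generalizing f with
  | zero =>
    rw [sum_eq_zero fun i _ =>
      Submodule.finrank_eq_zero.2 (LinearMap.ker_eq_bot'.2 fun y hy => ?_)]
    simpa [skewEval_apply, hf] using hy
  | succ d ih =>
    by_cases h : ∀ i, LinearMap.ker (skewEval σ f (d + 2) (a i)) = ⊥
    · rw [sum_eq_zero fun i _ => Submodule.finrank_eq_zero.2 (h i)]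
      exact Nat.zero_le _
    obtain ⟨i, hi⟩ := not_forall.1 h
    obtain ⟨y, hy, hy0⟩ := (Submodule.ne_bot_iff _).1 hi
    set c := σ y * a i / y
    have hc : c ≠ 0 := div_ne_zero (mul_ne_zero ((map_ne_zero σ).2 hy0) (ha i)) hy0
    have hyc : twistMul σ (a i) y = c * y := by simp [c, div_mul_cancel₀ _ hy0]
    have hroot : ∑ j ∈ range (d + 2), f j * partialNorm σ j c = 0 := by
      have h := skewEval_apply_of_twistMul_apply_eq σ hyc f (d + 2)
      rw [LinearMap.mem_ker.1 hy] at h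
      exact (mul_eq_zero.1 h.symm).resolve_right hy0
    obtain ⟨g, hgd, hfg⟩ := exists_skewEval_eq_comp_sub σ hc hroot
    calc ∑ i, finrank K (LinearMap.ker (skewEval σ f (d + 2) (a i)))
        ≤ ∑ i, (finrank K (LinearMap.ker (skewEval σ g (d + 1) (a i))) +
            finrank K (LinearMap.ker (twistMul σ (a i) - LinearMap.mulLeft K c))) :=
          sum_le_sum fun i _ => hfg (a i) ▸ finrank_ker_comp_le _ _
      _ = ∑ i, finrank K (LinearMap.ker (skewEval σ g (d + 1) (a i))) +
            ∑ i, finrank K (LinearMap.ker (twistMul σ (a i) - LinearMap.mulLeft K c)) :=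
          sum_add_distrib
      _ ≤ d + 1 :=
          add_le_add (ih g (hgd ▸ hf)) (sum_finrank_ker_twistMul_sub_le_one hσm hσ ha hnorm c)

theorem sum_finrank_ker_skewEval_le_sub (hσm : σ ^ m = 1)
    (hσ : ∀ τ : L ≃ₐ[K] L, τ ∈ Subgroup.zpowers σ) (ha : ∀ i, a i ≠ 0)
    (hnorm : Function.Injective fun i => partialNorm σ m (a i))
    {f : ℕ → L} {e d N : ℕ} (hd : f d ≠ 0) (hdN : d < N) (hlow : ∀ j < e, f j = 0)
    (hhigh : ∀ j, d < j → j < N → f j = 0) :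
    ∑ i, finrank K (LinearMap.ker (skewEval σ f N (a i))) ≤ d - e := by
  have hed : e ≤ d := not_lt.1 fun h => hd (hlow d h)
  have hker_pow : ∀ i, LinearMap.ker (twistMul σ (a i) ^ e) = ⊥ := fun i =>
    LinearMap.ker_eq_bot.2 <| by
      rw [Module.End.coe_pow]
      exact (twistMul_injective σ (ha i)).iterate e
  calc ∑ i, finrank K (LinearMap.ker (skewEval σ f N (a i)))
      = ∑ i, finrank K (LinearMap.ker (skewEval σ f (d + 1) (a i))) := by
        refine sum_congr rfl fun i _ => ?_
        rw [skewEval_eq_of_le σ (N := d + 1) hdN fun j hj => hhigh j hj]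
    _ ≤ ∑ i, finrank K (LinearMap.ker (skewEval σ (fun j => f (j + e)) (d - e + 1) (a i))) := by
        refine sum_le_sum fun i _ => ?_
        rw [skewEval_eq_comp_pow σ (by omega : e ≤ d + 1) hlow,
          show d + 1 - e = d - e + 1 by omega]
        have h := finrank_ker_comp_le (skewEval σ (fun j => f (j + e)) (d - e + 1) (a i))
          (twistMul σ (a i) ^ e)
        rwa [hker_pow i, finrank_bot, add_zero] at h
    _ ≤ d - e :=
        sum_finrank_ker_skewEval_le hσm hσ ha hnorm (d - e) _ (by rwa [Nat.sub_add_cancel hed])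

end Galois

lemma exists_first_last_ne_zero {M : Type*} [Zero M] {f : ℕ → M} {N : ℕ}
    (h : ∃ j < N, f j ≠ 0) :
    ∃ e d, d < N ∧ f e ≠ 0 ∧ f d ≠ 0 ∧ (∀ j < e, f j = 0) ∧
      ∀ j, d < j → j < N → f j = 0 := by
  classical
  obtain ⟨j, hjN, hj⟩ := h
  have he : ∃ j, f j ≠ 0 := ⟨j, hj⟩
  refine ⟨Nat.find he, Nat.findGreatest (fun j => f j ≠ 0) (N - 1), ?_, Nat.find_spec he,
    Nat.findGreatest_spec (P := fun j => f j ≠ 0) (m := j) (by omega) hj,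
    fun i hi => not_not.1 (Nat.find_min he hi), fun i hdi hiN => not_not.1 fun hi => ?_⟩
  · have := Nat.findGreatest_le (P := fun j => f j ≠ 0) (N - 1)
    omega
  · have := Nat.le_findGreatest (P := fun j => f j ≠ 0) (by omega : i ≤ N - 1) hi
    omega

section HyperplaneSections

variable {K L : Type} [Field K] [Field L] [Algebra K L] {k : ℕ}

lemma dotL_lrsMap (σ : L ≃ₐ[K] L) {v : Fin k → L} {f : ℕ → L} (hf : ∀ j : Fin k, f j = v j)
    (a y : L) : dotL L v (lrsMap K L σ k a y) = skewEval σ f k a y := by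
  rw [skewEval_apply, ← Fin.sum_univ_eq_sum_range (fun j => f j * (twistMul σ a ^ j) y) k]
  change ∑ j, v j * lrsMap K L σ k a y j = _
  refine sum_congr rfl fun j _ => ?_
  rw [hf, twistMul_pow_apply]
  rfl

lemma finrank_map_lrsMap_inf_perpQ_le [FiniteDimensional K L] (σ : L ≃ₐ[K] L)
    {v : Fin k → L} {f : ℕ → L} (hf : ∀ j : Fin k, f j = v j) (S : Submodule K L) (a : L) :
    finrank K ↥(S.map (lrsMap K L σ k a) ⊓ perpQ K L v) ≤
      finrank K (LinearMap.ker (skewEval σ f k a)) := by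
  have hle : S.map (lrsMap K L σ k a) ⊓ perpQ K L v ≤
      (LinearMap.ker (skewEval σ f k a)).map (lrsMap K L σ k a) := by
    rintro _ ⟨⟨y, -, rfl⟩, hy⟩
    refine ⟨y, ?_, rfl⟩
    change skewEval σ f k a y = 0
    rw [← dotL_lrsMap σ hf]
    exact hy
  exact (Submodule.finrank_mono hle).trans (Submodule.finrank_map_le _ _)

lemma span_singleton_inf_perpQ_eq_bot {u v : Fin k → L} {j₀ : Fin k}
    (hu : ∀ j, j ≠ j₀ → u j = 0) (hv : v j₀ ≠ 0) : (K ∙ u) ⊓ perpQ K L v = ⊥ := by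
  rw [Submodule.eq_bot_iff]
  rintro _ ⟨hw, hperp⟩
  obtain ⟨r, rfl⟩ := Submodule.mem_span_singleton.1 hw
  have h : ∑ j, v j * (r • u) j = 0 := hperp
  rw [sum_eq_single j₀ (fun j _ hj => by simp [hu j hj]) (by simp)] at h
  funext j
  by_cases hj : j = j₀
  · subst hj
    simpa [hv] using h
  · simp [hu j hj]

lemma finrank_span_singleton_inf_perpQ_le {u v : Fin k → L} {j₀ : Fin k}
    (hu : ∀ j, j ≠ j₀ → u j = 0) {n : ℕ} (hn : n = 0 → v j₀ ≠ 0) :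
    finrank K ↥((K ∙ u) ⊓ perpQ K L v) ≤ n := by
  rcases n.eq_zero_or_pos with rfl | hn₀
  · rw [span_singleton_inf_perpQ_eq_bot hu (hn rfl), finrank_bot]
  · exact (finrank_span_singleton_inf_le_one u _).trans hn₀

end HyperplaneSections

theorem doublyExtendedLRS_MSRD_general
    (Fq Fqm : Type) [Field Fq] [Field Fqm] [Fintype Fqm] [Algebra Fq Fqm]
    (m : ℕ) (hm : Module.finrank Fq Fqm = m)
    (σ : Fqm ≃ₐ[Fq] Fqm) (hσ : ∀ τ : Fqm ≃ₐ[Fq] Fqm, τ ∈ Subgroup.zpowers σ)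
    (n t k : ℕ)
    (β : Fin n → Fqm)
    (a : Fin t → Fqm) (ha0 : ∀ i, a i ≠ 0)
    (hnorm : ∀ i j : Fin t,
      (∏ l ∈ Finset.range m, (σ ^ l) (a i)) = (∏ l ∈ Finset.range m, (σ ^ l) (a j)) → i = j)
    (γ δ : Fqm)
    (U₀ Uinf : Submodule Fq (Fin k → Fqm))
    (hU₀ : U₀ = Submodule.span Fq {fun j : Fin k => if (j : ℕ) = 0 then γ else 0})
    (hUinf : Uinf = Submodule.span Fq {fun j : Fin k => if (j : ℕ) = k - 1 then δ else 0})
    (v : Fin k → Fqm) (hv : v ≠ 0) :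
    (∑ i, Module.finrank Fq
        ↥((Submodule.span Fq (Set.range β)).map (lrsMap Fq Fqm σ k (a i)) ⊓ perpQ Fq Fqm v))
      + Module.finrank Fq ↥(U₀ ⊓ perpQ Fq Fqm v)
      + Module.finrank Fq ↥(Uinf ⊓ perpQ Fq Fqm v)
      ≤ k - 1 := by
  have hσm : σ ^ m = 1 := by
    rw [← hm, ← IsGalois.card_aut_eq_finrank Fq Fqm]
    exact pow_card_eq_one'
  set f : ℕ → Fqm := fun j => if h : j < k then v ⟨j, h⟩ else 0
  have hf : ∀ j : Fin k, f j = v j := fun j => dif_pos j.isLt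
  obtain ⟨j, hj⟩ := Function.ne_iff.1 hv
  obtain ⟨e, d, hdk, hfe, hfd, hlow, hhigh⟩ :=
    exists_first_last_ne_zero (f := f) ⟨j, j.isLt, by rwa [hf]⟩
  have hed : e ≤ d := not_lt.1 fun h => hfd (hlow d h)
  have hLRS : ∑ i, finrank Fq
      ↥((Submodule.span Fq (Set.range β)).map (lrsMap Fq Fqm σ k (a i)) ⊓ perpQ Fq Fqm v) ≤ d - e :=
    (sum_le_sum fun i _ => finrank_map_lrsMap_inf_perpQ_le σ hf _ (a i)).trans
      (sum_finrank_ker_skewEval_le_sub hσm hσ ha0 hnorm hfd hdk hlow hhigh)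
  have hU₀e : finrank Fq ↥(U₀ ⊓ perpQ Fq Fqm v) ≤ e := by
    rw [hU₀]
    refine finrank_span_singleton_inf_perpQ_le (j₀ := ⟨0, by omega⟩)
      (fun j hj => if_neg fun h => hj (Fin.ext h)) fun he => ?_
    rw [← hf]
    exact he ▸ hfe
  have hUinfd : finrank Fq ↥(Uinf ⊓ perpQ Fq Fqm v) ≤ k - 1 - d := by
    rw [hUinf]
    refine finrank_span_singleton_inf_perpQ_le (j₀ := ⟨k - 1, by omega⟩)
      (fun j hj => if_neg fun h => hj (Fin.ext h)) fun hd => ?_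
    rw [← hf]
    exact (show d = k - 1 by omega) ▸ hfd
  omega

/-- doubly-extended linearized Reed–Solomon codes are MSRD:
with `U i` as for the linearized Reed–Solomon code, `U₀ = Fq·(γ,0,…,0)` and
`U∞ = Fq·(0,…,0,δ)`, one has
`∑ i dim_{Fq}(U i ∩ H) + dim_{Fq}(U₀ ∩ H) + dim_{Fq}(U∞ ∩ H) ≤ k - 1`
for every hyperplane `H = v^⊥` of `Fqm^k`. -/
theorem doublyExtendedLRS_MSRD
    (Fq Fqm : Type) [Field Fq] [Field Fqm] [Fintype Fq] [Fintype Fqm] [Algebra Fq Fqm]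
    (m : ℕ) (hm : Module.finrank Fq Fqm = m)
    (σ : Fqm ≃ₐ[Fq] Fqm) (hσ : ∀ τ : Fqm ≃ₐ[Fq] Fqm, τ ∈ Subgroup.zpowers σ)
    (n t k : ℕ) (hnm : n ≤ m)
    (β : Fin n → Fqm) (hβ : LinearIndependent Fq β)
    (a : Fin t → Fqm) (ha0 : ∀ i, a i ≠ 0)
    (hnorm : ∀ i j : Fin t,
      (∏ l ∈ Finset.range m, (σ ^ l) (a i)) = (∏ l ∈ Finset.range m, (σ ^ l) (a j)) → i = j)
    (hk2 : 2 ≤ k) (hkN : k ≤ n * t)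
    (γ δ : Fqm) (hγ : γ ≠ 0) (hδ : δ ≠ 0)
    (U₀ Uinf : Submodule Fq (Fin k → Fqm))
    (hU₀ : U₀ = Submodule.span Fq {fun j : Fin k => if (j : ℕ) = 0 then γ else 0})
    (hUinf : Uinf = Submodule.span Fq {fun j : Fin k => if (j : ℕ) = k - 1 then δ else 0})
    (v : Fin k → Fqm) (hv : v ≠ 0) :
    (∑ i, Module.finrank Fq
        ↥((Submodule.span Fq (Set.range β)).map (lrsMap Fq Fqm σ k (a i)) ⊓ perpQ Fq Fqm v))
      + Module.finrank Fq ↥(U₀ ⊓ perpQ Fq Fqm v)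
      + Module.finrank Fq ↥(Uinf ⊓ perpQ Fq Fqm v)
      ≤ k - 1 :=
  doublyExtendedLRS_MSRD_general Fq Fqm m hm σ hσ n t k β a ha0 hnorm γ δ U₀ Uinf hU₀ hUinf v hv
end

section
/- Let r be a divisor of m (so 𝔽_{q^r} is a subfield of 𝔽_{q^m}), let s ≥ 1, and let 𝒢 be a subgroup of GL(k, 𝔽_{q^m}) that acts transitively on the one-dimensional 𝔽_{q^m}-subspaces of 𝔽_{q^m}^k via v ↦ vA. Let 𝒪 be an orbit of the induced action of 𝒢 on the set of s-dimensional 𝔽_{q^r}-subspaces of 𝔽_{q^m}^k (where A sends U to U·A = {uA : u ∈ U}). Then for any two nonzero v₁, v₂ ∈ 𝔽_{q^m}^k there exists a bijection π : 𝒪 → 𝒪 such that dim_{𝔽_q}(π(U) ∩ v₁^⊥) = dim_{𝔽_q}(U ∩ v₂^⊥) for every U ∈ 𝒪. Consequently, the multiset of intersection dimensions {dim_{𝔽_q}(U ∩ H) : U ∈ 𝒪} is the same for every 𝔽_{q^m}-hyperplane H, i.e., every sum-rank metric code associated with the system formed by the members of 𝒪 has constant rank-profile. -/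
namespace MulAction

variable {Γ X Y : Type*} [Group Γ] [MulAction Γ X] [MulAction Γ Y]

theorem card_orbitRel_quotient_eq_of_card_fixedBy_eq [Finite Γ] [Finite X] [Finite Y]
    (e : Γ ≃ Γ) (he : ∀ g, Nat.card (fixedBy X g) = Nat.card (fixedBy Y (e g))) :
    Nat.card (orbitRel.Quotient Γ X) = Nat.card (orbitRel.Quotient Γ Y) := by
  classical
  have := Fintype.ofFinite Γ
  have := Fintype.ofFinite X
  have := Fintype.ofFinite Y
  have hX := sum_card_fixedBy_eq_card_orbits_mul_card_group Γ X
  have hY := sum_card_fixedBy_eq_card_orbits_mul_card_group Γ Y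
  have hsum : ∑ g : Γ, Fintype.card (fixedBy X g) = ∑ g : Γ, Fintype.card (fixedBy Y g) :=
    Fintype.sum_equiv e _ _ fun g => by simpa only [Nat.card_eq_fintype_card] using he g
  simp only [Nat.card_eq_fintype_card]
  exact Nat.eq_of_mul_eq_mul_right Fintype.card_pos (hX.symm.trans (hsum.trans hY))

theorem card_orbitRel_quotient_le_two {x₀ x₁ : X} (h : ∀ x, x ≠ x₀ → ∃ g : Γ, g • x₁ = x) :
    Nat.card (orbitRel.Quotient Γ X) ≤ 2 := by
  have hsurj : Function.Surjective fun b : Bool =>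
      (if b then ⟦x₀⟧ else ⟦x₁⟧ : orbitRel.Quotient Γ X) := by
    rintro ⟨x⟩
    by_cases hx : x = x₀
    · subst hx
      exact ⟨true, rfl⟩
    · obtain ⟨g, rfl⟩ := h x hx
      exact ⟨false, Quotient.sound ⟨g⁻¹, inv_smul_smul g x₁⟩⟩
  simpa using Nat.card_le_card_of_surjective _ hsurj

theorem exists_smul_eq_of_card_orbitRel_quotient_le_two [Finite X] {x₀ x y : X}
    (h₀ : ∀ g : Γ, g • x₀ = x₀) (hcard : Nat.card (orbitRel.Quotient Γ X) ≤ 2)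
    (hx : x ≠ x₀) (hy : y ≠ x₀) : ∃ g : Γ, g • x = y := by
  have hne₀ : ∀ z, z ≠ x₀ → (⟦x₀⟧ : orbitRel.Quotient Γ X) ≠ ⟦z⟧ := by
    rintro z hz hrel
    obtain ⟨g, hg⟩ := Quotient.exact hrel
    have hg : g • z = x₀ := hg
    exact hz (by rw [← inv_smul_smul g z, hg, h₀])
  by_contra hxy
  have hne : (⟦x⟧ : orbitRel.Quotient Γ X) ≠ ⟦y⟧ := by
    rintro hrel
    obtain ⟨g, hg⟩ := Quotient.exact hrel.symm
    exact hxy ⟨g, hg⟩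
  have h3 : ({⟦x₀⟧, ⟦x⟧, ⟦y⟧} : Set (orbitRel.Quotient Γ X)).ncard = 3 :=
    Set.ncard_eq_three.2 ⟨_, _, _, hne₀ x hx, hne₀ y hy, hne, rfl⟩
  have := Set.ncard_le_card ({⟦x₀⟧, ⟦x⟧, ⟦y⟧} : Set (orbitRel.Quotient Γ X))
  omega

end MulAction

namespace Matrix

variable {n F : Type*} [Fintype n] [Field F]

theorem finrank_ker_mulVecLin_transpose (N : Matrix n n F) :
    Module.finrank F (LinearMap.ker Nᵀ.mulVecLin) =
      Module.finrank F (LinearMap.ker N.mulVecLin) := by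
  have h := LinearMap.finrank_range_add_finrank_ker N.mulVecLin
  have hT := LinearMap.finrank_range_add_finrank_ker Nᵀ.mulVecLin
  have hrank : Nᵀ.rank = N.rank := rank_transpose N
  rw [rank, rank] at hrank
  omega

theorem card_fixed_mulVec_eq_card_fixed_vecMul [DecidableEq n] [Finite F] (M : Matrix n n F) :
    Nat.card {x : n → F // M *ᵥ x = x} = Nat.card {x : n → F // x ᵥ* M = x} := by
  have hfix : ∀ N : Matrix n n F,
      Nat.card {x : n → F // N *ᵥ x = x} = Nat.card (LinearMap.ker (N - 1).mulVecLin) :=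
    fun N => Nat.card_congr <| Equiv.subtypeEquivRight fun x => by
      simp [sub_eq_zero]
  calc Nat.card {x : n → F // M *ᵥ x = x}
      = Nat.card (LinearMap.ker (M - 1).mulVecLin) := hfix M
    _ = Nat.card (LinearMap.ker (Mᵀ - 1).mulVecLin) := by
      have hrank := finrank_ker_mulVecLin_transpose (M - 1)
      rw [transpose_sub, transpose_one] at hrank
      exact Nat.card_congr (LinearEquiv.ofFinrankEq _ _ hrank.symm).toEquiv
    _ = Nat.card {x : n → F // x ᵥ* M = x} := by
      simp_rw [← hfix, mulVec_transpose]

end Matrix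

namespace Matrix.GeneralLinearGroup

open MulAction

variable {n F : Type*} [Fintype n] [DecidableEq n] [Field F] (G : Subgroup (GL n F))

/- Two copies of `n → F`, so that `Fˣ × G` can act on both: `(c, A)` sends a row vector `x` to
`c • x ᵥ* A⁻¹` and a column vector `y` to `c • A *ᵥ y`. -/
def RowVector (n F : Type*) : Type _ := n → F

def ColVector (n F : Type*) : Type _ := n → F

def RowVector.of : (n → F) ≃ RowVector n F := Equiv.refl _

def ColVector.of : (n → F) ≃ ColVector n F := Equiv.refl _

instance [Finite F] : Finite (RowVector n F) := inferInstanceAs (Finite (n → F))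

instance [Finite F] : Finite (ColVector n F) := inferInstanceAs (Finite (n → F))

instance : MulAction (Fˣ × G) (RowVector n F) where
  smul g x := (g.1 : F) • (x : n → F) ᵥ* (((g.2⁻¹ : G) : GL n F) : Matrix n n F)
  one_smul (x : n → F) := show (1 : F) • x ᵥ* (((1 : G) : GL n F) : Matrix n n F) = x by simp
  mul_smul g h (x : n → F) :=
    show ((g.1 * h.1 : Fˣ) : F) • x ᵥ* ((((g.2 * h.2)⁻¹ : G) : GL n F) : Matrix n n F) =
      (g.1 : F) • ((h.1 : F) • x ᵥ* (((h.2⁻¹ : G) : GL n F) : Matrix n n F)) ᵥ*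
        (((g.2⁻¹ : G) : GL n F) : Matrix n n F) by
    simp [smul_vecMul, vecMul_vecMul, mul_smul]

instance : MulAction (Fˣ × G) (ColVector n F) where
  smul g y := (g.1 : F) • (((g.2 : G) : GL n F) : Matrix n n F) *ᵥ (y : n → F)
  one_smul (y : n → F) := show (1 : F) • (((1 : G) : GL n F) : Matrix n n F) *ᵥ y = y by simp
  mul_smul g h (y : n → F) :=
    show ((g.1 * h.1 : Fˣ) : F) • ((((g.2 * h.2) : G) : GL n F) : Matrix n n F) *ᵥ y =
      (g.1 : F) • (((g.2 : G) : GL n F) : Matrix n n F) *ᵥ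
        ((h.1 : F) • (((h.2 : G) : GL n F) : Matrix n n F) *ᵥ y) by
    simp [mulVec_smul, mulVec_mulVec, mul_smul]

theorem RowVector.smul_of (g : Fˣ × G) (x : n → F) :
    g • of x = of ((g.1 : F) • x ᵥ* (((g.2⁻¹ : G) : GL n F) : Matrix n n F)) := rfl

theorem ColVector.smul_of (g : Fˣ × G) (y : n → F) :
    g • of y = of ((g.1 : F) • (((g.2 : G) : GL n F) : Matrix n n F) *ᵥ y) := rfl

theorem card_fixedBy_colVector [Finite F] (g : Fˣ × G) :
    Nat.card (fixedBy (ColVector n F) g) = Nat.card (fixedBy (RowVector n F) (g.1, g.2⁻¹)) := by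
  set M : Matrix n n F := (g.1 : F) • ((g.2 : GL n F) : Matrix n n F)
  calc Nat.card (fixedBy (ColVector n F) g)
      = Nat.card {x : n → F // M *ᵥ x = x} :=
        Nat.card_congr <| (Equiv.subtypeEquiv ColVector.of fun x => by
          rw [mem_fixedBy, ColVector.smul_of, ColVector.of.injective.eq_iff, smul_mulVec]).symm
    _ = Nat.card {x : n → F // x ᵥ* M = x} := card_fixed_mulVec_eq_card_fixed_vecMul M
    _ = Nat.card (fixedBy (RowVector n F) (g.1, g.2⁻¹)) :=
        Nat.card_congr <| Equiv.subtypeEquiv RowVector.of fun x => by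
          rw [mem_fixedBy, RowVector.smul_of, RowVector.of.injective.eq_iff, inv_inv, vecMul_smul]

theorem card_orbitRel_quotient_colVector [Finite F] :
    Nat.card (orbitRel.Quotient (Fˣ × G) (ColVector n F)) =
      Nat.card (orbitRel.Quotient (Fˣ × G) (RowVector n F)) :=
  card_orbitRel_quotient_eq_of_card_fixedBy_eq ((Equiv.refl Fˣ).prodCongr (Equiv.inv G))
    (card_fixedBy_colVector G)

theorem exists_mulVec_eq_smul_of_exists_vecMul_eq_smul [Finite F]
    (hG : ∀ x y : n → F, x ≠ 0 → y ≠ 0 →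
      ∃ A ∈ G, ∃ c : F, c ≠ 0 ∧ x ᵥ* (A : Matrix n n F) = c • y)
    {v w : n → F} (hv : v ≠ 0) (hw : w ≠ 0) :
    ∃ A ∈ G, ∃ c : F, c ≠ 0 ∧ (A : Matrix n n F) *ᵥ v = c • w := by
  have hrow : Nat.card (orbitRel.Quotient (Fˣ × G) (RowVector n F)) ≤ 2 := by
    refine card_orbitRel_quotient_le_two (x₀ := .of 0) (x₁ := .of v) fun x hx => ?_
    obtain ⟨x, rfl⟩ := RowVector.of.surjective x
    obtain ⟨A, hA, c, hc, hAc⟩ := hG v x hv (RowVector.of.injective.ne_iff.1 hx)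
    refine ⟨((Units.mk0 c hc)⁻¹, (⟨A, hA⟩ : G)⁻¹), ?_⟩
    rw [RowVector.smul_of]
    simp [hAc, inv_smul_smul₀ hc]
  have hzero : ∀ g : Fˣ × G, g • ColVector.of (0 : n → F) = .of 0 := fun g => by
    rw [ColVector.smul_of, mulVec_zero, smul_zero]
  obtain ⟨⟨c, A⟩, hcA⟩ := exists_smul_eq_of_card_orbitRel_quotient_le_two hzero
    ((card_orbitRel_quotient_colVector G).trans_le hrow)
    (ColVector.of.injective.ne hv) (ColVector.of.injective.ne hw)
  rw [ColVector.smul_of, ColVector.of.injective.eq_iff] at hcA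
  exact ⟨A, A.2, (c⁻¹ : Fˣ), Units.ne_zero _, by rw [← hcA]; exact (inv_smul_smul c _).symm⟩

end Matrix.GeneralLinearGroup

open Matrix

section Hyperplane

variable (Fq : Type) {Fqm : Type} [Field Fq] [Field Fqm] [Algebra Fq Fqm] {k : ℕ}

theorem mem_perpQ {v u : Fin k → Fqm} : u ∈ perpQ Fq Fqm v ↔ v ⬝ᵥ u = 0 := Iff.rfl

theorem comap_vecMul_perpQ {A : Matrix (Fin k) (Fin k) Fqm} {v w : Fin k → Fqm} {c : Fqm}
    (hc : c ≠ 0) (hA : A *ᵥ v = c • w) :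
    (perpQ Fq Fqm v).comap ((vecMulLinear A).restrictScalars Fq) = perpQ Fq Fqm w := by
  ext u
  rw [Submodule.mem_comap, mem_perpQ, mem_perpQ, LinearMap.restrictScalars_apply,
    vecMulLinear_apply, dotProduct_comm, ← dotProduct_mulVec, hA, dotProduct_smul,
    smul_eq_mul, mul_eq_zero, dotProduct_comm, or_iff_right hc]

theorem finrank_map_vecMul_inf_perpQ {A : GL (Fin k) Fqm} {v w : Fin k → Fqm} {c : Fqm}
    (hc : c ≠ 0) (hA : (A : Matrix (Fin k) (Fin k) Fqm) *ᵥ v = c • w)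
    (W : Submodule Fq (Fin k → Fqm)) :
    Module.finrank Fq
        ↥(W.map ((vecMulLinear (A : Matrix (Fin k) (Fin k) Fqm)).restrictScalars Fq) ⊓
          perpQ Fq Fqm v) =
      Module.finrank Fq ↥(W ⊓ perpQ Fq Fqm w) := by
  rw [Submodule.map_inf_eq_map_inf_comap, comap_vecMul_perpQ Fq hc hA]
  exact (Submodule.equivMapOfInjective _ (vecMul_injective_of_isUnit A.isUnit) _).finrank_eq.symm

end Hyperplane

section Orbit

variable {R S n : Type*} [CommSemiring R] [CommRing S] [Algebra R S] [Fintype n]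

theorem map_vecMulLinear_map_vecMulLinear (U : Submodule R (n → S)) (A B : Matrix n n S) :
    (U.map ((vecMulLinear A).restrictScalars R)).map ((vecMulLinear B).restrictScalars R) =
      U.map ((vecMulLinear (A * B)).restrictScalars R) := by
  rw [← Submodule.map_comp]
  congr 1
  exact LinearMap.ext fun x => by simp [vecMul_vecMul]

variable [DecidableEq n]

theorem map_vecMulLinear_one (U : Submodule R (n → S)) :
    U.map ((vecMulLinear (1 : Matrix n n S)).restrictScalars R) = U := by
  convert Submodule.map_id U
  exact LinearMap.ext fun x => by simp

variable (G : Subgroup (GL n S)) (U₀ : Submodule R (n → S))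

def vecMulOrbit : Set (Submodule R (n → S)) :=
  {U | ∃ A ∈ G, U = U₀.map ((vecMulLinear (A : Matrix n n S)).restrictScalars R)}

variable {G U₀}

theorem map_vecMulLinear_mem_vecMulOrbit {U : Submodule R (n → S)} (hU : U ∈ vecMulOrbit G U₀)
    {B : GL n S} (hB : B ∈ G) :
    U.map ((vecMulLinear (B : Matrix n n S)).restrictScalars R) ∈ vecMulOrbit G U₀ := by
  obtain ⟨A, hA, rfl⟩ := hU
  exact ⟨A * B, mul_mem hA hB, by rw [map_vecMulLinear_map_vecMulLinear, Units.val_mul]⟩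

def vecMulOrbitPerm {B : GL n S} (hB : B ∈ G) : vecMulOrbit G U₀ ≃ vecMulOrbit G U₀ where
  toFun U := ⟨_, map_vecMulLinear_mem_vecMulOrbit U.2 hB⟩
  invFun U := ⟨_, map_vecMulLinear_mem_vecMulOrbit U.2 (inv_mem hB)⟩
  left_inv U := Subtype.ext <| by
    simp only [map_vecMulLinear_map_vecMulLinear, ← Units.val_mul, mul_inv_cancel, Units.val_one,
      map_vecMulLinear_one]
  right_inv U := Subtype.ext <| by
    simp only [map_vecMulLinear_map_vecMulLinear, ← Units.val_mul, inv_mul_cancel, Units.val_one,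
      map_vecMulLinear_one]

@[simp]
theorem coe_vecMulOrbitPerm_apply {B : GL n S} (hB : B ∈ G) (U : vecMulOrbit G U₀) :
    (vecMulOrbitPerm hB U : Submodule R (n → S)) =
      (U : Submodule R (n → S)).map ((vecMulLinear (B : Matrix n n S)).restrictScalars R) :=
  rfl

end Orbit

theorem orbit_constant_rank_profile_general
    (Fq Fqr Fqm : Type) [Field Fq] [Field Fqr] [Field Fqm]
    [Fintype Fqm]
    [Algebra Fq Fqr] [Algebra Fqr Fqm] [Algebra Fq Fqm] [IsScalarTower Fq Fqr Fqm]
    (s k : ℕ)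
    (G : Subgroup (Matrix.GeneralLinearGroup (Fin k) Fqm))
    (htrans : ∀ v w : Fin k → Fqm, v ≠ 0 → w ≠ 0 →
      ∃ A ∈ G, ∃ lam : Fqm, lam ≠ 0 ∧
        Matrix.vecMul v ((A : Matrix (Fin k) (Fin k) Fqm)) = lam • w)
    (O : Set (Submodule Fqr (Fin k → Fqm)))
    (hO : ∃ U₀ : Submodule Fqr (Fin k → Fqm), Module.finrank Fqr U₀ = s ∧
      O = {U | ∃ A ∈ G, U = U₀.map
        ((Matrix.vecMulLinear ((A : Matrix (Fin k) (Fin k) Fqm))).restrictScalars Fqr)})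
    (v₁ v₂ : Fin k → Fqm) (hv₁ : v₁ ≠ 0) (hv₂ : v₂ ≠ 0) :
    ∃ π : O ≃ O, ∀ U : O,
      Module.finrank Fq
          ↥(Submodule.restrictScalars Fq (π U : Submodule Fqr (Fin k → Fqm)) ⊓ perpQ Fq Fqm v₁)
        = Module.finrank Fq
          ↥(Submodule.restrictScalars Fq (U : Submodule Fqr (Fin k → Fqm)) ⊓ perpQ Fq Fqm v₂) := by
  obtain ⟨U₀, -, hO⟩ := hO
  replace hO : O = vecMulOrbit G U₀ := hO
  subst hO
  obtain ⟨A, hAG, c, hc, hA⟩ :=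
    GeneralLinearGroup.exists_mulVec_eq_smul_of_exists_vecMul_eq_smul G htrans hv₁ hv₂
  refine ⟨vecMulOrbitPerm hAG, fun U => ?_⟩
  rw [coe_vecMulOrbitPerm_apply, Submodule.restrictScalars_map]
  exact finrank_map_vecMul_inf_perpQ Fq hc hA _

/-- orbital construction yields constant rank-profile codes:
if `𝒪` is an orbit of a transitive subgroup `𝒢 ≤ GL(k, Fqm)` on `s`-dimensional
`Fqr`-subspaces of `Fqm^k`, then for any two hyperplanes `v₁^⊥`, `v₂^⊥` there is a
bijection `π` of `𝒪` matching the `Fq`-dimensions of the intersections. -/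
theorem orbit_constant_rank_profile
    (Fq Fqr Fqm : Type) [Field Fq] [Field Fqr] [Field Fqm]
    [Fintype Fq] [Fintype Fqr] [Fintype Fqm]
    [Algebra Fq Fqr] [Algebra Fqr Fqm] [Algebra Fq Fqm] [IsScalarTower Fq Fqr Fqm]
    (r m s k : ℕ) (hr : Module.finrank Fq Fqr = r) (hm : Module.finrank Fq Fqm = m)
    (hrm : r ∣ m) (hs : 1 ≤ s) (hk : 1 ≤ k)
    (G : Subgroup (Matrix.GeneralLinearGroup (Fin k) Fqm))
    (htrans : ∀ v w : Fin k → Fqm, v ≠ 0 → w ≠ 0 →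
      ∃ A ∈ G, ∃ lam : Fqm, lam ≠ 0 ∧
        Matrix.vecMul v ((A : Matrix (Fin k) (Fin k) Fqm)) = lam • w)
    (O : Set (Submodule Fqr (Fin k → Fqm)))
    (hO : ∃ U₀ : Submodule Fqr (Fin k → Fqm), Module.finrank Fqr U₀ = s ∧
      O = {U | ∃ A ∈ G, U = U₀.map
        ((Matrix.vecMulLinear ((A : Matrix (Fin k) (Fin k) Fqm))).restrictScalars Fqr)})
    (v₁ v₂ : Fin k → Fqm) (hv₁ : v₁ ≠ 0) (hv₂ : v₂ ≠ 0) :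
    ∃ π : O ≃ O, ∀ U : O,
      Module.finrank Fq
          ↥(Submodule.restrictScalars Fq (π U : Submodule Fqr (Fin k → Fqm)) ⊓ perpQ Fq Fqm v₁)
        = Module.finrank Fq
          ↥(Submodule.restrictScalars Fq (U : Submodule Fqr (Fin k → Fqm)) ⊓ perpQ Fq Fqm v₂) :=
  orbit_constant_rank_profile_general Fq Fqr Fqm s k G htrans O hO v₁ v₂ hv₁ hv₂
end

section
/- Let t ≥ 1, n_1,…,n_t ≥ 1 with N = n_1+…+n_t ≥ 2, and for each i let G_i ∈ 𝔽_{q^m}^{2×n_i} be a matrix whose n_i columns are linearly independent over 𝔽_q, with U_i ⊆ 𝔽_{q^m}² the 𝔽_q-span of the columns of G_i; assume the U_i together span 𝔽_{q^m}² over 𝔽_{q^m}. Then the following are equivalent: (a) for every nonzero v ∈ 𝔽_{q^m}², Σ_{i=1}^t rk_q(v·G_i) = N − 1 (i.e., the associated 2-dimensional code is a one-weight maximum sum-rank distance code); (b) for every one-dimensional 𝔽_{q^m}-subspace S of 𝔽_{q^m}², Σ_{i=1}^t dim_{𝔽_q}(U_i ∩ S) = 1 (i.e., the multi-linear set L_U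 is scattered and covers all of PG(1, q^m)). -/
/-!
Rank–nullity for the `𝔽_q`-linear map `w ↦ v ⬝ᵥ w` restricted to `U_i` gives
`rk_q(v G_i) + dim_q(U_i ∩ v^⊥) = n_i`. Summing over `i`, the sum-rank weight of `v G` and the
multi-weight of the point `v^⊥` add up to `N`, and every point of `PG(1, q^m)` is some `v^⊥`.
-/

open Matrix Module Submodule

theorem Submodule.finrank_map_add_finrank_inf_ker {K V W : Type*} [DivisionRing K]
    [AddCommGroup V] [Module K V] [AddCommGroup W] [Module K W]
    (g : V →ₗ[K] W) (U : Submodule K V) [FiniteDimensional K U] :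
    finrank K (U.map g) + finrank K ↥(U ⊓ LinearMap.ker g) = finrank K U := by
  have h := LinearMap.finrank_range_add_finrank_ker (g.domRestrict U)
  rwa [LinearMap.range_domRestrict, LinearMap.ker_domRestrict, ← finrank_map_subtype_eq,
    map_comap_subtype] at h

theorem Submodule.exists_dual_eq_ker_of_finrank_add_one {K V : Type*} [Field K]
    [AddCommGroup V] [Module K V] [FiniteDimensional K V] {S : Submodule K V}
    (hS : finrank K S + 1 = finrank K V) :
    ∃ f : Dual K V, f ≠ 0 ∧ S = LinearMap.ker f := by
  obtain ⟨f, hf, hSf⟩ := S.exists_le_ker_of_lt_top (lt_top_of_finrank_lt_finrank (by omega))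
  have hker := Dual.finrank_ker_add_one_of_ne_zero hf
  exact ⟨f, hf, eq_of_le_of_finrank_eq hSf (by omega)⟩

theorem finrank_span_vecMul_add_finrank_inf_ker {K L : Type*} [Field K] [Field L] [Algebra K L]
    {ι κ : Type*} [Fintype ι] [DecidableEq ι] [Fintype κ] (M : Matrix ι κ L)
    (hM : LinearIndependent K fun j => Mᵀ j) (v : ι → L) :
    finrank K (span K (Set.range (v ᵥ* M)))
      + finrank K ↥(span K (Set.range fun j => Mᵀ j)
          ⊓ (LinearMap.ker (dotProductEquiv L ι v)).restrictScalars K) = Fintype.card κ := by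
  have hcomp : v ᵥ* M = ((dotProductEquiv L ι v).restrictScalars K) ∘ fun j => Mᵀ j := rfl
  have : FiniteDimensional K (span K (Set.range fun j => Mᵀ j)) :=
    FiniteDimensional.span_of_finite K (Set.finite_range _)
  rw [hcomp, Set.range_comp, ← map_span, ← LinearMap.ker_restrictScalars,
    finrank_map_add_finrank_inf_ker, finrank_span_eq_card hM]

theorem one_weight_MSRD_iff_scattered_cover_general
    (Fq Fqm : Type) [Field Fq] [Field Fqm] [Algebra Fq Fqm]
    (t : ℕ) (n : Fin t → ℕ)
    (N : ℕ) (hN : N = ∑ i, n i) (hN2 : 2 ≤ N)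
    (G : ∀ i : Fin t, Matrix (Fin 2) (Fin (n i)) Fqm)
    (hG : ∀ i, LinearIndependent Fq (fun j : Fin (n i) => (G i)ᵀ j)) :
    (∀ v : Fin 2 → Fqm, v ≠ 0 →
        ∑ i, Module.finrank Fq (Submodule.span Fq (Set.range (Matrix.vecMul v (G i))))
          = N - 1)
      ↔ (∀ S : Submodule Fqm (Fin 2 → Fqm), Module.finrank Fqm S = 1 →
          ∑ i, Module.finrank Fq
            ↥(Submodule.span Fq (Set.range (fun j : Fin (n i) => (G i)ᵀ j))
              ⊓ Submodule.restrictScalars Fq S) = 1) := by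
  have hsum (v : Fin 2 → Fqm) :
      ∑ i, finrank Fq (span Fq (Set.range (v ᵥ* G i)))
        + ∑ i, finrank Fq ↥(span Fq (Set.range fun j => (G i)ᵀ j)
            ⊓ (LinearMap.ker (dotProductEquiv Fqm (Fin 2) v)).restrictScalars Fq) = N := by
    rw [← Finset.sum_add_distrib, hN]
    exact Finset.sum_congr rfl fun i _ => by
      simpa using finrank_span_vecMul_add_finrank_inf_ker (G i) (hG i) v
  constructor
  · intro hweight S hS
    obtain ⟨f, hf, rfl⟩ := exists_dual_eq_ker_of_finrank_add_one (S := S) (by simp [hS])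
    obtain ⟨v, rfl⟩ := (dotProductEquiv Fqm (Fin 2)).surjective f
    have := hweight v (by simpa using hf)
    have := hsum v
    omega
  · intro hcover v hv
    have hline := Dual.finrank_ker_add_one_of_ne_zero (f := dotProductEquiv Fqm (Fin 2) v)
      (by simpa using hv)
    have := hcover _ (by simpa using hline)
    have := hsum v
    omega

/-- characterization of 2-dimensional one-weight MSRD codes:
for a nondegenerate 2-dimensional system `(U 1, …, U t)` spanning `Fqm²`, every nonzero
codeword has sum-rank weight `N − 1` iff every one-dimensional `Fqm`-subspace `S` of `Fqm²`
satisfies `∑ i dim_{Fq}(U i ∩ S) = 1` (scattered multi-linear set covering `PG(1, q^m)`). -/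
theorem one_weight_MSRD_iff_scattered_cover
    (Fq Fqm : Type) [Field Fq] [Field Fqm] [Fintype Fq] [Fintype Fqm] [Algebra Fq Fqm]
    (t : ℕ) (ht : 1 ≤ t) (n : Fin t → ℕ) (hn : ∀ i, 1 ≤ n i)
    (N : ℕ) (hN : N = ∑ i, n i) (hN2 : 2 ≤ N)
    (G : ∀ i : Fin t, Matrix (Fin 2) (Fin (n i)) Fqm)
    (hG : ∀ i, LinearIndependent Fq (fun j : Fin (n i) => (G i)ᵀ j))
    (hspan : Submodule.span Fqm
      (⋃ i, ((Submodule.span Fq (Set.range (fun j : Fin (n i) => (G i)ᵀ j)) :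
        Submodule Fq (Fin 2 → Fqm)) : Set (Fin 2 → Fqm))) = ⊤) :
    (∀ v : Fin 2 → Fqm, v ≠ 0 →
        ∑ i, Module.finrank Fq (Submodule.span Fq (Set.range (Matrix.vecMul v (G i))))
          = N - 1)
      ↔ (∀ S : Submodule Fqm (Fin 2 → Fqm), Module.finrank Fqm S = 1 →
          ∑ i, Module.finrank Fq
            ↥(Submodule.span Fq (Set.range (fun j : Fin (n i) => (G i)ᵀ j))
              ⊓ Submodule.restrictScalars Fq S) = 1) :=
  one_weight_MSRD_iff_scattered_cover_general Fq Fqm t n N hN hN2 G hG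
end
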